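/- arXiv:2403.08735 — 2 statements merged into one kernel-verified Lean document; each statement's English description precedes it below -/
import Mathlib

section
/- Let X be a set of arcs of the completed ∞-gon ōZ_m. Then X satisfies the completed PC conditions if and only if the set π⁻¹X ∩ A of arcs of Z_{2m} satisfies the PC conditions. -/
namespace PY

/-! ### The ∞-gon `Z_{2m}`

Labels are elements of `Fin (2 * m)`, ordered `1' < 1 < 2' < 2 < ⋯ < m' < m`:
the label `2 * i` is the primed (accumulation-point) label `(i+1)'` and the label
`2 * i + 1` is the unprimed label `i + 1`.  A point of `Z_{2m}` is a pair of a label and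
an integer. -/

/-- Points of the ∞-gon `Z_{2m}`: a label and an integer. -/
abbrev Pt (m : ℕ) := Fin (2 * m) × ℤ

/-- Cyclic successor of a label. -/
def cycSucc {n : ℕ} (r : Fin n) : Fin n := ⟨(r.1 + 1) % n, Nat.mod_lt _ r.pos⟩

/-- Cyclic predecessor of a label. -/
def cycPred {n : ℕ} (r : Fin n) : Fin n := ⟨(r.1 + (n - 1)) % n, Nat.mod_lt _ r.pos⟩

/-- Strict lexicographic order on the points of `Z_{2m}`. -/
def ptLt {m : ℕ} (a b : Pt m) : Prop := a.1 < b.1 ∨ (a.1 = b.1 ∧ a.2 < b.2)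

/-- `sort2 a b` is the pair `(a, b)` arranged in (weakly) increasing lexicographic
order; it realizes the notation `|a, b|` for the arc connecting two points. -/
def sort2 {m : ℕ} (a b : Pt m) : Pt m × Pt m :=
  if a.1 < b.1 ∨ (a.1 = b.1 ∧ a.2 ≤ b.2) then (a, b) else (b, a)

/-- An ordered pair of points of `Z_{2m}` is an arc when its endpoints are in increasing
lexicographic order and, if they lie in the same copy of `ℤ`, differ by at least `2`. -/
def IsArc {m : ℕ} (x : Pt m × Pt m) : Prop :=
  ptLt x.1 x.2 ∧ (x.1.1 = x.2.1 → x.1.2 + 2 ≤ x.2.2)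

/-- The precovering conditions (PC conditions) for a set of arcs of `Z_{2m}`. -/
structure PCcond {m : ℕ} (U : Set (Pt m × Pt m)) : Prop where
  pc1 : ∀ p q : Fin (2 * m), p ≠ q → ∀ x1 x2 : ℕ → ℤ, StrictMono x1 → StrictMono x2 →
    (∀ n, ((p, x1 n), (q, x2 n)) ∈ U) →
    ∃ y1 y2 : ℕ → ℤ, StrictAnti y1 ∧ StrictAnti y2 ∧
      ∀ n, sort2 (cycSucc p, y1 n) (cycSucc q, y2 n) ∈ U
  pc2 : ∀ p q : Fin (2 * m), p ≠ cycSucc q → ∀ x1 x2 : ℕ → ℤ,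
    StrictAnti x1 → StrictMono x2 →
    (∀ n, ((p, x1 n), (q, x2 n)) ∈ U) →
    ∃ y1 y2 : ℕ → ℤ, StrictAnti y1 ∧ StrictAnti y2 ∧
      ∀ n, sort2 (p, y1 n) (cycSucc q, y2 n) ∈ U
  pc2' : ∀ p q : Fin (2 * m), q ≠ cycSucc p → p ≠ q → ∀ x1 x2 : ℕ → ℤ,
    StrictMono x1 → StrictAnti x2 →
    (∀ n, ((p, x1 n), (q, x2 n)) ∈ U) →
    ∃ y1 y2 : ℕ → ℤ, StrictAnti y1 ∧ StrictAnti y2 ∧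
      ∀ n, sort2 (cycSucc p, y1 n) (q, y2 n) ∈ U
  pc3 : ∀ p q : Fin (2 * m), ∀ (x1 : ℤ) (x2 : ℕ → ℤ), StrictMono x2 →
    (∀ n, ((p, x1), (q, x2 n)) ∈ U) →
    ∃ y2 : ℕ → ℤ, StrictAnti y2 ∧ ∀ n, sort2 (p, x1) (cycSucc q, y2 n) ∈ U
  pc3' : ∀ p q : Fin (2 * m), p ≠ q → ∀ (x1 : ℕ → ℤ) (x2 : ℤ), StrictMono x1 →
    (∀ n, ((p, x1 n), (q, x2)) ∈ U) →
    ∃ y1 : ℕ → ℤ, StrictAnti y1 ∧ ∀ n, sort2 (cycSucc p, y1 n) (q, x2) ∈ U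

/-- A point is admissible for the subcategory `A`: its label is unprimed, or it is a
point `(q, n)` of a primed copy with `n ≤ z0`. -/
def memA {m : ℕ} (z0 : ℤ) (a : Pt m) : Prop :=
  a.1.1 % 2 = 1 ∨ (a.1.1 % 2 = 0 ∧ a.2 ≤ z0)

/-- The set of arcs `A` determined by the choice of `z0`. -/
def setA (m : ℕ) (z0 : ℤ) : Set (Pt m × Pt m) :=
  {x | memA z0 x.1 ∧ memA z0 x.2}

/-! ### Decorations

The linearly ordered set `{p} ∪ Z^(p) ∪ {p⁺}` is modelled as `WithBot (WithTop ℤ)`: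
`⊥` is the accumulation point `p`, an integer `n` is the point `n` of `Z^(p)`, and the
top element is the accumulation point `p⁺`. -/

/-- The linearly ordered set `{p} ∪ Z^(p) ∪ {p⁺}`. -/
abbrev Dm := WithBot (WithTop ℤ)

/-- An integer, viewed in `{p} ∪ Z^(p) ∪ {p⁺}`. -/
def toDm (n : ℤ) : Dm := ((n : WithTop ℤ) : Dm)

/-- The element `p⁺` of `{p} ∪ Z^(p) ∪ {p⁺}`. -/
def topDm : Dm := ((⊤ : WithTop ℤ) : Dm)

/-- The unprimed label `p ∈ [m]` with index `i`. -/
def unpr {m : ℕ} (i : Fin m) : Fin (2 * m) := ⟨2 * i.1 + 1, by have := i.2; omega⟩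

/-- The primed label `p' ∈ [m']` with index `i`. -/
def prim {m : ℕ} (i : Fin m) : Fin (2 * m) := ⟨2 * i.1, by have := i.2; omega⟩

/-- Four points of `Fin n` (viewed on a circle with its natural cyclic order) are in
(strict, anticlockwise) cyclic order. -/
def Cyc4 {n : ℕ} (a b c d : Fin n) : Prop :=
  (a < b ∧ b < c ∧ c < d) ∨ (b < c ∧ c < d ∧ d < a) ∨
  (c < d ∧ d < a ∧ a < b) ∨ (d < a ∧ a < b ∧ b < c)

/-- A partition (setoid) of `Fin n` is non-crossing if there are no elements
`i1, j1, i2, j2` in cyclic order with `i1, i2` in one block and `j1, j2` in a different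
block. -/
def IsNoncrossing {n : ℕ} (P : Setoid (Fin n)) : Prop :=
  ∀ i1 j1 i2 j2 : Fin n, Cyc4 i1 j1 i2 j2 → P.r i1 i2 → P.r j1 j2 → P.r i1 j1

/-! ### Alternating non-crossing partitions and the arc sets `U_{(P,X)}` -/

/-- A point of `Z_{2m}` belongs to the interval `[x_{p⁻}, p⁺)` attached to the primed
label `p' ∈ [m']` of index `j`: it lies in the primed copy `Z^(p)`, or in the unprimed
copy `Z^(p⁻)` above the decoration `x_{p⁻}`. -/
def altRegion {m : ℕ} (x : Fin m → Dm) (j : Fin m) (a : Pt m) : Prop :=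
  a.1 = prim j ∨ (a.1 = unpr (cycPred j) ∧ x (cycPred j) ≤ toDm a.2)

/-- The set of arcs `U_{(P,X)}` associated with an alternating non-crossing partition
`(P, X)`: arcs both of whose endpoints lie in `⋃_{p ∈ B} [x_{p⁻}, p⁺)` for a single
block `B` of `P`. -/
def altU {m : ℕ} (P : Setoid (Fin m)) (x : Fin m → Dm) : Set (Pt m × Pt m) :=
  {a | IsArc a ∧ ∃ b : Fin m,
    (∃ j, P.r b j ∧ altRegion x j a.1) ∧ (∃ j, P.r b j ∧ altRegion x j a.2)}

end PY

namespace PY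

/-! ### The completed ∞-gon `ōZ_m`

A point is a pair of an index `p ∈ Fin m` and an element of `ℤ ∪ {⊥}`: the point
`(p, ⊥)` is the collapsed accumulation point `p' ∈ [m']` and `(p, n)` with `n : ℤ` is
the point `n` of the surviving copy `C^(p)`. -/

/-- Points of the completed ∞-gon `ōZ_m`. -/
abbrev CPt (m : ℕ) := Fin m × WithBot ℤ

/-- Strict lexicographic order on the points of `ōZ_m`. -/
def cptLt {m : ℕ} (a b : CPt m) : Prop := a.1 < b.1 ∨ (a.1 = b.1 ∧ a.2 < b.2)

/-- `csort2 a b` is the pair `(a, b)` arranged in (weakly) increasing lexicographic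
order; it realizes the notation `|a, b|` for the arc connecting two points. -/
noncomputable def csort2 {m : ℕ} (a b : CPt m) : CPt m × CPt m :=
  if a.1 < b.1 ∨ (a.1 = b.1 ∧ a.2 ≤ b.2) then (a, b) else (b, a)

/-- An ordered pair of points of `ōZ_m` is an arc when its endpoints are in increasing
lexicographic order and, if both are integer points of the same copy of `ℤ`, they differ
by at least `2`. -/
def IsCArc {m : ℕ} (x : CPt m × CPt m) : Prop :=
  cptLt x.1 x.2 ∧ ∀ n1 n2 : ℤ, x.1.2 = (n1 : WithBot ℤ) → x.2.2 = (n2 : WithBot ℤ) →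
    x.1.1 = x.2.1 → n1 + 2 ≤ n2

/-- The index in `Fin m` associated with a label of `Z_{2m}`. -/
def projIdx {m : ℕ} (r : Fin (2 * m)) : Fin m := ⟨r.1 / 2, by have := r.2; omega⟩

/-- The quotient map `π` on points: a point of an unprimed copy survives, a point of a
primed copy is collapsed to the corresponding accumulation point. -/
def projPt {m : ℕ} (a : Pt m) : CPt m :=
  (projIdx a.1, if a.1.1 % 2 = 1 then (a.2 : WithBot ℤ) else ⊥)

/-- The preimage `π⁻¹X` of a set `X` of arcs of `ōZ_m`: all arcs of `Z_{2m}` having both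
endpoints in a single primed copy, together with the arcs whose image under `π` lies
in `X`. -/
def preim {m : ℕ} (X : Set (CPt m × CPt m)) : Set (Pt m × Pt m) :=
  {a | IsArc a ∧ ((a.1.1 = a.2.1 ∧ a.1.1.1 % 2 = 0) ∨ (projPt a.1, projPt a.2) ∈ X)}

/-- The completed precovering conditions (the `ōPC` conditions) for a set of arcs of the
completed ∞-gon `ōZ_m`. -/
structure CPCcond {m : ℕ} (X : Set (CPt m × CPt m)) : Prop where
  pc1 : ∀ p q : Fin m, p ≠ q → ∀ x1 x2 : ℕ → ℤ, StrictMono x1 → StrictMono x2 →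
    (∀ n, (((p, (x1 n : WithBot ℤ)) : CPt m), ((q, (x2 n : WithBot ℤ)) : CPt m)) ∈ X) →
    csort2 (cycSucc p, ⊥) (cycSucc q, ⊥) ∈ X
  pc2 : ∀ p q : Fin m, ∀ x1 x2 : ℕ → ℤ, StrictAnti x1 → StrictMono x2 →
    (∀ n, (((p, (x1 n : WithBot ℤ)) : CPt m), ((q, (x2 n : WithBot ℤ)) : CPt m)) ∈ X) →
    ∃ y1 : ℕ → ℤ, StrictAnti y1 ∧
      ∀ n, csort2 (p, (y1 n : WithBot ℤ)) (cycSucc q, ⊥) ∈ X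
  pc2' : ∀ p q : Fin m, p ≠ q → ∀ x1 x2 : ℕ → ℤ, StrictMono x1 → StrictAnti x2 →
    (∀ n, (((p, (x1 n : WithBot ℤ)) : CPt m), ((q, (x2 n : WithBot ℤ)) : CPt m)) ∈ X) →
    ∃ y2 : ℕ → ℤ, StrictAnti y2 ∧
      ∀ n, csort2 (cycSucc p, ⊥) (q, (y2 n : WithBot ℤ)) ∈ X
  pc3 : ∀ (x1 : CPt m) (q : Fin m), x1 ≠ (cycSucc q, (⊥ : WithBot ℤ)) →
    ∀ x2 : ℕ → ℤ, StrictMono x2 →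
    (∀ n, (x1, ((q, (x2 n : WithBot ℤ)) : CPt m)) ∈ X) →
    csort2 x1 (cycSucc q, ⊥) ∈ X
  pc3' : ∀ (p : Fin m) (x2 : CPt m), ¬ (x2.1 = p ∧ x2.2 ≠ ⊥) →
    x2 ≠ (cycSucc p, (⊥ : WithBot ℤ)) →
    ∀ x1 : ℕ → ℤ, StrictMono x1 →
    (∀ n, (((p, (x1 n : WithBot ℤ)) : CPt m), x2) ∈ X) →
    csort2 (cycSucc p, ⊥) x2 ∈ X

end PY

/-!
Inside `A` a primed copy is bounded above by `z0`, so in every PC condition for `π⁻¹X ∩ A`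
the strictly increasing coordinate sequences run through unprimed copies, on which `π` is the
identity; the ōPC conclusion at a collapsed point `q⁺` is then realised by the decreasing
sequence `z0 - n` of `Z^(q⁺)`, which lies in `A` and maps to `q⁺`. The only arcs of `π⁻¹X ∩ A`
not seen by `X` are those inside one primed copy, and they account for PC3 and PC3' when the
fixed endpoint lies in the target copy. Conversely, arcs of `X` are lifted to `π⁻¹X ∩ A` by
sending a collapsed point `q'` to `(q', z0)`, a PC condition is applied, and the arcs it yields
are pushed back by `π`, which commutes with sorting endpoints because it is monotone for the
lexicographic orders.
-/

namespace PY

variable {m : ℕ}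

lemma exists_lt_of_strictMono {x : ℕ → ℤ} (hx : StrictMono x) (c : ℤ) : ∃ n, c < x n := by
  have hgrowth : ∀ n : ℕ, x 0 + n ≤ x n := fun n => by
    induction n with
    | zero => simp
    | succ n ih => have := hx (Nat.lt_add_one n); push_cast; omega
  exact ⟨(c - x 0).toNat + 1, by have := hgrowth ((c - x 0).toNat + 1); omega⟩

lemma strictAnti_sub_natCast (c : ℤ) : StrictAnti fun n : ℕ => c - n :=
  fun _ _ h => by simp only; omega

lemma exists_eq_unpr_or_eq_prim (r : Fin (2 * m)) : ∃ i, r = unpr i ∨ r = prim i :=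
  ⟨projIdx r, by rcases Nat.mod_two_eq_zero_or_one r.1 with h | h <;>
    simp only [Fin.ext_iff, unpr, prim, projIdx] <;> omega⟩

lemma unpr_injective : Function.Injective (unpr : Fin m → Fin (2 * m)) :=
  fun i j h => Fin.ext (by simp only [Fin.ext_iff, unpr] at h; omega)

lemma prim_injective : Function.Injective (prim : Fin m → Fin (2 * m)) :=
  fun i j h => Fin.ext (by simp only [Fin.ext_iff, prim] at h; omega)

lemma unpr_ne_prim (i j : Fin m) : unpr i ≠ prim j := by
  simp only [ne_eq, Fin.ext_iff, unpr, prim]; omega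

lemma cycSucc_unpr (i : Fin m) : cycSucc (unpr i) = prim (cycSucc i) := by
  ext
  change (2 * i.1 + 1 + 1) % (2 * m) = 2 * ((i.1 + 1) % m)
  rw [show 2 * i.1 + 1 + 1 = 2 * (i.1 + 1) by ring, Nat.mul_mod_mul_left]

lemma cycSucc_injective {n : ℕ} : Function.Injective (cycSucc : Fin n → Fin n) := fun r s h =>
  Fin.ext ((Nat.ModEq.add_right_cancel' 1 (Fin.ext_iff.mp h)).eq_of_lt_of_lt r.2 s.2)

@[simp]
lemma projPt_unpr (i : Fin m) (n : ℤ) : projPt (unpr i, n) = (i, (n : WithBot ℤ)) := by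
  simp only [projPt, projIdx, unpr, Nat.mul_add_mod_self_left, Nat.mod_succ, ↓reduceIte,
    Prod.mk.injEq, Fin.ext_iff, and_true]
  omega

@[simp]
lemma projPt_prim (i : Fin m) (n : ℤ) : projPt (prim i, n) = (i, ⊥) := by
  simp [projPt, prim, projIdx]

lemma projPt_eq_bot_iff {a : Pt m} {i : Fin m} : projPt a = (i, ⊥) ↔ a.1 = prim i := by
  obtain ⟨r, s⟩ := a
  obtain ⟨k, rfl | rfl⟩ := exists_eq_unpr_or_eq_prim r <;>
    simp [unpr_ne_prim, prim_injective.eq_iff]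

lemma projPt_fst_eq_and_snd_ne_bot_iff {a : Pt m} {i : Fin m} :
    (projPt a).1 = i ∧ (projPt a).2 ≠ ⊥ ↔ a.1 = unpr i := by
  obtain ⟨r, s⟩ := a
  obtain ⟨k, rfl | rfl⟩ := exists_eq_unpr_or_eq_prim r <;>
    simp [(unpr_ne_prim _ _).symm, unpr_injective.eq_iff]

lemma memA_unpr (z0 : ℤ) (i : Fin m) (n : ℤ) : memA z0 (unpr i, n) :=
  .inl (by simp [unpr])

lemma memA_prim {z0 n : ℤ} (i : Fin m) (h : n ≤ z0) : memA z0 (prim i, n) :=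
  .inr ⟨by simp [prim], h⟩

lemma memA_prim_sub_natCast (z0 : ℤ) (i : Fin m) (n : ℕ) : memA z0 (prim i, z0 - n) :=
  memA_prim i (by omega)

lemma le_of_memA_prim {z0 n : ℤ} {i : Fin m} (h : memA z0 (prim i, n)) : n ≤ z0 := by
  rcases h with h | h
  · simp [prim] at h
  · exact h.2

lemma exists_eq_unpr_of_strictMono {z0 : ℤ} {p : Fin (2 * m)} {x : ℕ → ℤ}
    (hx : StrictMono x) (hA : ∀ n, memA z0 (p, x n)) : ∃ i, p = unpr i := by
  obtain ⟨i, rfl | rfl⟩ := exists_eq_unpr_or_eq_prim p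
  · exact ⟨i, rfl⟩
  · obtain ⟨n, hn⟩ := exists_lt_of_strictMono hx z0
    exact absurd (le_of_memA_prim (hA n)) hn.not_ge

lemma projPt_le_projPt {a b : Pt m} (h : toLex a ≤ toLex b) :
    toLex (projPt a) ≤ toLex (projPt b) := by
  obtain ⟨r, s⟩ := a
  obtain ⟨r', s'⟩ := b
  obtain ⟨i, rfl | rfl⟩ := exists_eq_unpr_or_eq_prim r <;>
  obtain ⟨j, rfl | rfl⟩ := exists_eq_unpr_or_eq_prim r' <;>
  simp only [projPt_unpr, projPt_prim] <;>
  simp only [Prod.Lex.toLex_le_toLex, Fin.lt_def, Fin.ext_iff, unpr, prim, WithBot.coe_le_coe,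
    bot_le, and_true] at h ⊢ <;> omega

lemma sort2_eq_min_max (a b : Pt m) :
    sort2 a b = (ofLex (min (toLex a) (toLex b)), ofLex (max (toLex a) (toLex b))) := by
  by_cases h : toLex a ≤ toLex b
  · rw [sort2, if_pos (Prod.Lex.toLex_le_toLex.mp h), min_eq_left h, max_eq_right h]; rfl
  · rw [sort2, if_neg (mt Prod.Lex.toLex_le_toLex.mpr h), min_eq_right (le_of_not_ge h),
      max_eq_left (le_of_not_ge h)]; rfl

lemma csort2_eq_min_max (a b : CPt m) :
    csort2 a b = (ofLex (min (toLex a) (toLex b)), ofLex (max (toLex a) (toLex b))) := by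
  by_cases h : toLex a ≤ toLex b
  · rw [csort2, if_pos (Prod.Lex.toLex_le_toLex.mp h), min_eq_left h, max_eq_right h]; rfl
  · rw [csort2, if_neg (mt Prod.Lex.toLex_le_toLex.mpr h), min_eq_right (le_of_not_ge h),
      max_eq_left (le_of_not_ge h)]; rfl

lemma csort2_projPt (a b : Pt m) :
    csort2 (projPt a) (projPt b) = (projPt (sort2 a b).1, projPt (sort2 a b).2) := by
  have hmono : Monotone fun c : Fin (2 * m) ×ₗ ℤ => toLex (projPt (ofLex c)) :=
    fun _ _ h => projPt_le_projPt h
  rw [sort2_eq_min_max, csort2_eq_min_max]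
  exact Prod.ext (congrArg ofLex hmono.map_min).symm (congrArg ofLex hmono.map_max).symm

lemma sort2_mem_setA {z0 : ℤ} {a b : Pt m} (ha : memA z0 a) (hb : memA z0 b) :
    sort2 a b ∈ setA m z0 := by
  unfold sort2
  split_ifs
  exacts [⟨ha, hb⟩, ⟨hb, ha⟩]

lemma isArc_sort2 {a b : Pt m} (hab : a.1 ≠ b.1) : IsArc (sort2 a b) := by
  unfold sort2 IsArc ptLt
  split_ifs with h
  · exact ⟨.inl (h.resolve_right fun h' => hab h'.1), fun h' => absurd h' hab⟩
  · push Not at h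
    exact ⟨.inl (lt_of_le_of_ne h.1 (Ne.symm hab)), fun h' => absurd h'.symm hab⟩

section Preimage

variable {X : Set (CPt m × CPt m)} {z0 : ℤ}

lemma sort2_mem_of_csort2_mem {a b : Pt m} (hab : a.1 ≠ b.1) (ha : memA z0 a) (hb : memA z0 b)
    (h : csort2 (projPt a) (projPt b) ∈ X) : sort2 a b ∈ preim X ∩ setA m z0 :=
  ⟨⟨isArc_sort2 hab, .inr (csort2_projPt a b ▸ h)⟩, sort2_mem_setA ha hb⟩

lemma csort2_mem_of_sort2_mem {a b : Pt m} (hab : a.1 ≠ b.1) (h : sort2 a b ∈ preim X) :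
    csort2 (projPt a) (projPt b) ∈ X := by
  rw [csort2_projPt]
  refine h.2.resolve_left fun hsame => ?_
  unfold sort2 at hsame
  split_ifs at hsame
  exacts [hab hsame.1, hab hsame.1.symm]

lemma projPt_mem_of_mem_preim {a b : Pt m} (h : (a, b) ∈ preim X)
    (hunpr : (∃ i, a.1 = unpr i) ∨ ∃ j, b.1 = unpr j) : (projPt a, projPt b) ∈ X := by
  refine h.2.resolve_left fun ⟨hab, heven⟩ => ?_
  simp only at hab heven
  have hodd : a.1.1 % 2 = 1 := by
    obtain ⟨i, hi⟩ | ⟨i, hi⟩ := hunpr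
    · simp [hi, unpr]
    · simp [hab, hi, unpr]
  omega

lemma prim_prim_mem {i : Fin m} {s t : ℤ} (hs : s ≤ z0) (ht : t ≤ z0) (hst : s + 2 ≤ t) :
    ((prim i, s), (prim i, t)) ∈ preim X ∩ setA m z0 :=
  ⟨⟨⟨.inr ⟨rfl, show s < t by omega⟩, fun _ => hst⟩, .inl ⟨rfl, by simp [prim]⟩⟩,
    memA_prim i hs, memA_prim i ht⟩

lemma sort2_prim_prim_mem {i : Fin m} {s t : ℤ} (hs : s ≤ z0) (ht : t ≤ z0)
    (hst : s + 2 ≤ t ∨ t + 2 ≤ s) : sort2 (prim i, s) (prim i, t) ∈ preim X ∩ setA m z0 := by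
  rcases hst with hst | hst
  · rw [sort2, if_pos (.inr ⟨rfl, by omega⟩)]
    exact prim_prim_mem hs ht hst
  · rw [sort2, if_neg (by simp only [lt_self_iff_false, true_and, false_or, not_le]; omega)]
    exact prim_prim_mem ht hs hst

theorem CPCcond.pc1_preim (h : CPCcond X) (p q : Fin (2 * m)) (hpq : p ≠ q) (x1 x2 : ℕ → ℤ)
    (h1 : StrictMono x1) (h2 : StrictMono x2)
    (hmem : ∀ n, ((p, x1 n), (q, x2 n)) ∈ preim X ∩ setA m z0) :
    ∃ y1 y2 : ℕ → ℤ, StrictAnti y1 ∧ StrictAnti y2 ∧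
      ∀ n, sort2 (cycSucc p, y1 n) (cycSucc q, y2 n) ∈ preim X ∩ setA m z0 := by
  obtain ⟨i, rfl⟩ := exists_eq_unpr_of_strictMono h1 fun n => (hmem n).2.1
  obtain ⟨j, rfl⟩ := exists_eq_unpr_of_strictMono h2 fun n => (hmem n).2.2
  have hij : i ≠ j := unpr_injective.ne_iff.mp hpq
  have hX : csort2 (cycSucc i, ⊥) (cycSucc j, ⊥) ∈ X := h.pc1 i j hij x1 x2 h1 h2 fun n => by
    simpa using projPt_mem_of_mem_preim (hmem n).1 (.inl ⟨i, rfl⟩)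
  refine ⟨fun n => z0 - n, fun n => z0 - n, strictAnti_sub_natCast z0, strictAnti_sub_natCast z0,
    fun n => ?_⟩
  rw [cycSucc_unpr, cycSucc_unpr]
  exact sort2_mem_of_csort2_mem (prim_injective.ne (cycSucc_injective.ne hij))
    (memA_prim_sub_natCast _ _ _) (memA_prim_sub_natCast _ _ _) (by simpa using hX)

theorem CPCcond.pc2_preim (h : CPCcond X) (p q : Fin (2 * m)) (hpq : p ≠ cycSucc q)
    (x1 x2 : ℕ → ℤ) (h1 : StrictAnti x1) (h2 : StrictMono x2)
    (hmem : ∀ n, ((p, x1 n), (q, x2 n)) ∈ preim X ∩ setA m z0) :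
    ∃ y1 y2 : ℕ → ℤ, StrictAnti y1 ∧ StrictAnti y2 ∧
      ∀ n, sort2 (p, y1 n) (cycSucc q, y2 n) ∈ preim X ∩ setA m z0 := by
  obtain ⟨j, rfl⟩ := exists_eq_unpr_of_strictMono h2 fun n => (hmem n).2.2
  have hX := fun n => projPt_mem_of_mem_preim (hmem n).1 (.inr ⟨j, rfl⟩)
  rw [cycSucc_unpr] at hpq ⊢
  obtain ⟨i, rfl | rfl⟩ := exists_eq_unpr_or_eq_prim p
  · obtain ⟨y1, hy1, hy⟩ := h.pc2 i j x1 x2 h1 h2 fun n => by simpa using hX n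
    exact ⟨y1, fun n => z0 - n, hy1, strictAnti_sub_natCast z0, fun n =>
      sort2_mem_of_csort2_mem (unpr_ne_prim _ _) (memA_unpr _ _ _) (memA_prim_sub_natCast _ _ _)
        (by simpa using hy n)⟩
  · have hne : ((i, ⊥) : CPt m) ≠ (cycSucc j, ⊥) := by simpa [prim_injective.eq_iff] using hpq
    have hX' := h.pc3 (i, ⊥) j hne x2 h2 fun n => by simpa using hX n
    exact ⟨fun n => z0 - n, fun n => z0 - n, strictAnti_sub_natCast z0,
      strictAnti_sub_natCast z0, fun n => sort2_mem_of_csort2_mem hpq (memA_prim_sub_natCast _ _ _)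
        (memA_prim_sub_natCast _ _ _) (by simpa using hX')⟩

theorem CPCcond.pc2'_preim (h : CPCcond X) (p q : Fin (2 * m)) (hqp : q ≠ cycSucc p) (hpq : p ≠ q)
    (x1 x2 : ℕ → ℤ) (h1 : StrictMono x1) (h2 : StrictAnti x2)
    (hmem : ∀ n, ((p, x1 n), (q, x2 n)) ∈ preim X ∩ setA m z0) :
    ∃ y1 y2 : ℕ → ℤ, StrictAnti y1 ∧ StrictAnti y2 ∧
      ∀ n, sort2 (cycSucc p, y1 n) (q, y2 n) ∈ preim X ∩ setA m z0 := by
  obtain ⟨i, rfl⟩ := exists_eq_unpr_of_strictMono h1 fun n => (hmem n).2.1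
  have hX := fun n => projPt_mem_of_mem_preim (hmem n).1 (.inl ⟨i, rfl⟩)
  rw [cycSucc_unpr] at hqp ⊢
  obtain ⟨j, rfl | rfl⟩ := exists_eq_unpr_or_eq_prim q
  · obtain ⟨y2, hy2, hy⟩ :=
      h.pc2' i j (unpr_injective.ne_iff.mp hpq) x1 x2 h1 h2 fun n => by simpa using hX n
    exact ⟨fun n => z0 - n, y2, strictAnti_sub_natCast z0, hy2, fun n =>
      sort2_mem_of_csort2_mem (unpr_ne_prim _ _).symm (memA_prim_sub_natCast _ _ _)
        (memA_unpr _ _ _) (by simpa using hy n)⟩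
  · have hne : ((j, ⊥) : CPt m) ≠ (cycSucc i, ⊥) := by simpa [prim_injective.eq_iff] using hqp
    have hX' := h.pc3' i (j, ⊥) (by simp) hne x1 h1 fun n => by simpa using hX n
    exact ⟨fun n => z0 - n, fun n => z0 - n, strictAnti_sub_natCast z0,
      strictAnti_sub_natCast z0, fun n => sort2_mem_of_csort2_mem hqp.symm
        (memA_prim_sub_natCast _ _ _) (memA_prim_sub_natCast _ _ _) (by simpa using hX')⟩

theorem CPCcond.pc3_preim (h : CPCcond X) (p q : Fin (2 * m)) (x1 : ℤ) (x2 : ℕ → ℤ)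
    (h2 : StrictMono x2) (hmem : ∀ n, ((p, x1), (q, x2 n)) ∈ preim X ∩ setA m z0) :
    ∃ y2 : ℕ → ℤ, StrictAnti y2 ∧ ∀ n, sort2 (p, x1) (cycSucc q, y2 n) ∈ preim X ∩ setA m z0 := by
  obtain ⟨j, rfl⟩ := exists_eq_unpr_of_strictMono h2 fun n => (hmem n).2.2
  have hx1 : memA z0 (p, x1) := (hmem 0).2.1
  rw [cycSucc_unpr]
  by_cases hp : p = prim (cycSucc j)
  · subst hp
    have hx1z := le_of_memA_prim hx1
    exact ⟨fun n => x1 - 2 - n, strictAnti_sub_natCast _, fun n =>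
      sort2_prim_prim_mem (t := x1 - 2 - n) hx1z (by omega) (.inr (by omega))⟩
  · have hX := h.pc3 (projPt (p, x1)) j (mt projPt_eq_bot_iff.mp hp) x2 h2 fun n => by
      simpa using projPt_mem_of_mem_preim (hmem n).1 (.inr ⟨j, rfl⟩)
    exact ⟨fun n => z0 - n, strictAnti_sub_natCast z0, fun n =>
      sort2_mem_of_csort2_mem hp hx1 (memA_prim_sub_natCast _ _ _) (by simpa using hX)⟩

theorem CPCcond.pc3'_preim (h : CPCcond X) (p q : Fin (2 * m)) (hpq : p ≠ q) (x1 : ℕ → ℤ)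
    (x2 : ℤ) (h1 : StrictMono x1) (hmem : ∀ n, ((p, x1 n), (q, x2)) ∈ preim X ∩ setA m z0) :
    ∃ y1 : ℕ → ℤ, StrictAnti y1 ∧ ∀ n, sort2 (cycSucc p, y1 n) (q, x2) ∈ preim X ∩ setA m z0 := by
  obtain ⟨i, rfl⟩ := exists_eq_unpr_of_strictMono h1 fun n => (hmem n).2.1
  have hx2 : memA z0 (q, x2) := (hmem 0).2.2
  rw [cycSucc_unpr]
  by_cases hq : q = prim (cycSucc i)
  · subst hq
    have hx2z := le_of_memA_prim hx2
    exact ⟨fun n => x2 - 2 - n, strictAnti_sub_natCast _, fun n =>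
      sort2_prim_prim_mem (s := x2 - 2 - n) (by omega) hx2z (.inl (by omega))⟩
  · have hX := h.pc3' i (projPt (q, x2)) (mt projPt_fst_eq_and_snd_ne_bot_iff.mp (Ne.symm hpq))
      (mt projPt_eq_bot_iff.mp hq) x1 h1 fun n => by
        simpa using projPt_mem_of_mem_preim (hmem n).1 (.inl ⟨i, rfl⟩)
    exact ⟨fun n => z0 - n, strictAnti_sub_natCast z0, fun n =>
      sort2_mem_of_csort2_mem (Ne.symm hq) (memA_prim_sub_natCast _ _ _) hx2 (by simpa using hX)⟩

def liftPt (z0 : ℤ) : CPt m → Pt m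
  | (i, ⊥) => (prim i, z0)
  | (i, (n : ℤ)) => (unpr i, n)

@[simp]
lemma projPt_liftPt (c : CPt m) : projPt (liftPt z0 c) = c := by
  obtain ⟨i, n⟩ := c
  induction n using WithBot.recBotCoe <;> simp [liftPt]

lemma memA_liftPt (c : CPt m) : memA z0 (liftPt z0 c) := by
  obtain ⟨i, n⟩ := c
  induction n using WithBot.recBotCoe
  exacts [memA_prim i le_rfl, memA_unpr z0 i _]

lemma liftPt_fst_eq_prim_iff {c : CPt m} {i : Fin m} : (liftPt z0 c).1 = prim i ↔ c = (i, ⊥) := by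
  obtain ⟨k, n⟩ := c
  induction n using WithBot.recBotCoe <;> simp [liftPt, unpr_ne_prim, prim_injective.eq_iff]

lemma liftPt_fst_eq_unpr_iff {c : CPt m} {i : Fin m} :
    (liftPt z0 c).1 = unpr i ↔ c.1 = i ∧ c.2 ≠ ⊥ := by
  obtain ⟨k, n⟩ := c
  induction n using WithBot.recBotCoe <;>
    simp [liftPt, (unpr_ne_prim _ _).symm, unpr_injective.eq_iff]

lemma isArc_liftPt {c : CPt m × CPt m} (hc : IsCArc c) : IsArc (liftPt z0 c.1, liftPt z0 c.2) := by
  obtain ⟨⟨i, s⟩, ⟨j, t⟩⟩ := c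
  induction s using WithBot.recBotCoe <;> induction t using WithBot.recBotCoe <;>
  simp [IsCArc, IsArc, cptLt, ptLt, liftPt, Fin.ext_iff, unpr, prim] at hc ⊢ <;>
  simp only [Fin.lt_def, Fin.le_def] at hc ⊢ <;> omega

lemma liftPt_mem (hX : ∀ a ∈ X, IsCArc a) {c : CPt m × CPt m} (hc : c ∈ X) :
    (liftPt z0 c.1, liftPt z0 c.2) ∈ preim X ∩ setA m z0 :=
  ⟨⟨isArc_liftPt (hX c hc), .inr (by simpa using hc)⟩, memA_liftPt _, memA_liftPt _⟩

theorem PCcond.pc1_of_preim (hU : PCcond (preim X ∩ setA m z0)) (hX : ∀ a ∈ X, IsCArc a)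
    (p q : Fin m) (hpq : p ≠ q) (x1 x2 : ℕ → ℤ) (h1 : StrictMono x1) (h2 : StrictMono x2)
    (hmem : ∀ n, (((p, (x1 n : WithBot ℤ)) : CPt m), ((q, (x2 n : WithBot ℤ)) : CPt m)) ∈ X) :
    csort2 (cycSucc p, ⊥) (cycSucc q, ⊥) ∈ X := by
  obtain ⟨y1, y2, -, -, hy⟩ := hU.pc1 (unpr p) (unpr q) (unpr_injective.ne hpq) x1 x2 h1 h2
    fun n => liftPt_mem hX (hmem n)
  rw [cycSucc_unpr, cycSucc_unpr] at hy
  simpa using csort2_mem_of_sort2_mem (prim_injective.ne (cycSucc_injective.ne hpq)) (hy 0).1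

theorem PCcond.pc2_of_preim (hU : PCcond (preim X ∩ setA m z0)) (hX : ∀ a ∈ X, IsCArc a)
    (p q : Fin m) (x1 x2 : ℕ → ℤ) (h1 : StrictAnti x1) (h2 : StrictMono x2)
    (hmem : ∀ n, (((p, (x1 n : WithBot ℤ)) : CPt m), ((q, (x2 n : WithBot ℤ)) : CPt m)) ∈ X) :
    ∃ y1 : ℕ → ℤ, StrictAnti y1 ∧ ∀ n, csort2 (p, (y1 n : WithBot ℤ)) (cycSucc q, ⊥) ∈ X := by
  have hpq : unpr p ≠ cycSucc (unpr q) := cycSucc_unpr q ▸ unpr_ne_prim _ _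
  obtain ⟨y1, y2, hy1, -, hy⟩ := hU.pc2 (unpr p) (unpr q) hpq x1 x2 h1 h2
    fun n => liftPt_mem hX (hmem n)
  refine ⟨y1, hy1, fun n => ?_⟩
  simpa [cycSucc_unpr] using csort2_mem_of_sort2_mem hpq (hy n).1

theorem PCcond.pc2'_of_preim (hU : PCcond (preim X ∩ setA m z0)) (hX : ∀ a ∈ X, IsCArc a)
    (p q : Fin m) (hpq : p ≠ q) (x1 x2 : ℕ → ℤ) (h1 : StrictMono x1) (h2 : StrictAnti x2)
    (hmem : ∀ n, (((p, (x1 n : WithBot ℤ)) : CPt m), ((q, (x2 n : WithBot ℤ)) : CPt m)) ∈ X) :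
    ∃ y2 : ℕ → ℤ, StrictAnti y2 ∧ ∀ n, csort2 (cycSucc p, ⊥) (q, (y2 n : WithBot ℤ)) ∈ X := by
  have hqp : unpr q ≠ cycSucc (unpr p) := cycSucc_unpr p ▸ unpr_ne_prim _ _
  obtain ⟨y1, y2, -, hy2, hy⟩ := hU.pc2' (unpr p) (unpr q) hqp (unpr_injective.ne hpq) x1 x2 h1 h2
    fun n => liftPt_mem hX (hmem n)
  refine ⟨y2, hy2, fun n => ?_⟩
  simpa [cycSucc_unpr] using csort2_mem_of_sort2_mem hqp.symm (hy n).1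

theorem PCcond.pc3_of_preim (hU : PCcond (preim X ∩ setA m z0)) (hX : ∀ a ∈ X, IsCArc a)
    (x1 : CPt m) (q : Fin m) (hne : x1 ≠ (cycSucc q, (⊥ : WithBot ℤ))) (x2 : ℕ → ℤ)
    (h2 : StrictMono x2) (hmem : ∀ n, (x1, ((q, (x2 n : WithBot ℤ)) : CPt m)) ∈ X) :
    csort2 x1 (cycSucc q, ⊥) ∈ X := by
  obtain ⟨y2, -, hy⟩ := hU.pc3 (liftPt z0 x1).1 (unpr q) (liftPt z0 x1).2 x2 h2
    fun n => liftPt_mem hX (hmem n)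
  rw [cycSucc_unpr] at hy
  simpa using csort2_mem_of_sort2_mem (mt liftPt_fst_eq_prim_iff.mp hne) (hy 0).1

theorem PCcond.pc3'_of_preim (hU : PCcond (preim X ∩ setA m z0)) (hX : ∀ a ∈ X, IsCArc a)
    (p : Fin m) (x2 : CPt m) (hc1 : ¬ (x2.1 = p ∧ x2.2 ≠ ⊥))
    (hc2 : x2 ≠ (cycSucc p, (⊥ : WithBot ℤ))) (x1 : ℕ → ℤ) (h1 : StrictMono x1)
    (hmem : ∀ n, (((p, (x1 n : WithBot ℤ)) : CPt m), x2) ∈ X) :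
    csort2 (cycSucc p, ⊥) x2 ∈ X := by
  obtain ⟨y1, -, hy⟩ := hU.pc3' (unpr p) (liftPt z0 x2).1
    (fun h => hc1 (liftPt_fst_eq_unpr_iff.mp h.symm)) x1 (liftPt z0 x2).2 h1
    fun n => liftPt_mem hX (hmem n)
  rw [cycSucc_unpr] at hy
  simpa using csort2_mem_of_sort2_mem (fun h => hc2 (liftPt_fst_eq_prim_iff.mp h.symm)) (hy 0).1

end Preimage

end PY

open PY in
theorem completedPC_iff_preimage_inter_A_PC_general
    (m : ℕ) (z0 : ℤ)
    (X : Set (CPt m × CPt m)) (hX : ∀ a ∈ X, IsCArc a) :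
    CPCcond X ↔ PCcond (preim X ∩ setA m z0) :=
  ⟨fun h => ⟨h.pc1_preim, h.pc2_preim, h.pc2'_preim, h.pc3_preim, h.pc3'_preim⟩,
    fun hU => ⟨hU.pc1_of_preim hX, hU.pc2_of_preim hX, hU.pc2'_of_preim hX,
      hU.pc3_of_preim hX, hU.pc3'_of_preim hX⟩⟩

open PY in
theorem completedPC_iff_preimage_inter_A_PC
    (m : ℕ) (hm : 0 < m) (z0 : ℤ)
    (X : Set (CPt m × CPt m)) (hX : ∀ a ∈ X, IsCArc a) :
    CPCcond X ↔ PCcond (preim X ∩ setA m z0) :=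
  completedPC_iff_preimage_inter_A_PC_general m z0 X hX
end

section
/- Let (P, X) be a half-decorated non-crossing partition of [m'] ∪ [m] and let U := U_{(P,X)}. Then (P, X) is recovered from the arc set U as follows: (i) for all labels r, s ∈ L, r and s lie in a common block of P if and only if r = s or there exists an arc of U with one endpoint in Z^(r) and the other endpoint in Z^(s); and (ii) for every p ∈ [m], x_p equals the supremum, in the linearly ordered set {p} ∪ Z^(p) ∪ {p⁺}, of the set of points of Z^(p) that occur as an endpoint of some arc of U (this supremum being p if the set is empty and p⁺ if the set is unbounded above). -/
namespace PY

/-- The condition on the decorations of a half-decorated non-crossing partition of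
`[m'] ∪ [m]`: for an unprimed label `p` (of index `i`, with cyclic successor the primed
label `p⁺` of index `i + 1`), if `{p}` is a block of `P` then `x_p ≠ p⁺`; if `p` and `p⁺`
lie in a common block of `P` then `x_p ≠ p`; otherwise `x_p ∈ Z^(p)`. -/
def HalfDecCond {m : ℕ} (P : Setoid (Fin (2 * m))) (x : Fin m → Dm) : Prop :=
  ∀ i : Fin m,
    ((∀ r, P.r (unpr i) r → r = unpr i) → x i ≠ topDm) ∧
    (P.r (unpr i) (prim (cycSucc i)) → x i ≠ (⊥ : Dm)) ∧
    (¬ (∀ r, P.r (unpr i) r → r = unpr i) → ¬ P.r (unpr i) (prim (cycSucc i)) →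
      ∃ n : ℤ, x i = toDm n)

/-- A point of `Z_{2m}` lies in the region attached to the block of the label `b`: its
label lies in the block of `b` and, if its label is an unprimed label `p`, then it lies
in the interval `(p, x_p]`. -/
def hdRegion {m : ℕ} (P : Setoid (Fin (2 * m))) (x : Fin m → Dm) (b : Fin (2 * m))
    (a : Pt m) : Prop :=
  P.r b a.1 ∧ ∀ i : Fin m, a.1 = unpr i → toDm a.2 ≤ x i

/-- The set of arcs `U_{(P,X)}` associated with a half-decorated non-crossing partition
`(P, X)`: arcs both of whose endpoints lie in
`(⋃_{p ∈ B ∩ [m]} (p, x_p]) ∪ (⋃_{p ∈ B ∩ [m']} Z^(p))` for a single block `B` of `P`. -/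
def hdU {m : ℕ} (P : Setoid (Fin (2 * m))) (x : Fin m → Dm) : Set (Pt m × Pt m) :=
  {a | IsArc a ∧ ∃ b : Fin (2 * m), hdRegion P x b a.1 ∧ hdRegion P x b a.2}

end PY

/-!
STATEMENT 13: Let (P, X) be a half-decorated non-crossing partition of [m'] ∪ [m] and
U := U_{(P,X)}. Then (P, X) is recovered from U: (i) two labels lie in a common block of
P iff they are equal or some arc of U has one endpoint in each of the corresponding
copies of ℤ; (ii) for each p ∈ [m], x_p is the supremum in {p} ∪ Z^(p) ∪ {p⁺} of the set
of points of Z^(p) occurring as an endpoint of an arc of U (this supremum being p if the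
set is empty and p⁺ if it is unbounded above).
-/


namespace PY

private lemma unpr_inj {m : ℕ} {i j : Fin m} (h : unpr i = unpr j) : i = j := by
  simp only [unpr, Fin.ext_iff] at h ⊢
  omega

private lemma toDm_le_toDm {a b : ℤ} (h : a ≤ b) : toDm a ≤ toDm b := by
  simpa [toDm] using h

private lemma toDm_ne_bot (n : ℤ) : toDm n ≠ (⊥ : Dm) := by simp [toDm]

private lemma toDm_le_top (n : ℤ) : toDm n ≤ topDm := by
  simp [toDm, topDm]

/-- Membership of `toDm n` in the endpoint set, for `n` below the decoration. -/
private lemma mem_endpoints {m : ℕ} (P : Setoid (Fin (2 * m))) (x : Fin m → Dm)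
    (i : Fin m) (n : ℤ) (h : toDm n ≤ x i) :
    toDm n ∈ {d : Dm | ∃ n : ℤ, d = toDm n ∧
        ∃ a ∈ hdU P x, a.1 = (unpr i, n) ∨ a.2 = (unpr i, n)} := by
  refine ⟨n, rfl, ((unpr i, n - 2), (unpr i, n)), ?_, Or.inr rfl⟩
  have hreg : ∀ k : ℤ, toDm k ≤ x i → hdRegion P x (unpr i) (unpr i, k) := by
    intro k hk
    refine ⟨P.iseqv.refl _, ?_⟩
    intro j hj
    have hji : i = j := unpr_inj hj
    subst hji
    exact hk
  refine ⟨⟨Or.inr ⟨rfl, by show n - 2 < n; omega⟩, fun _ => by show n - 2 + 2 ≤ n; omega⟩,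
    unpr i, ?_, ?_⟩
  · exact hreg (n - 2) (le_trans (toDm_le_toDm (by omega)) h)
  · exact hreg n h

end PY

open PY in
theorem halfDecorated_recovered_from_hdU
    (m : ℕ) (hm : 0 < m)
    (P : Setoid (Fin (2 * m))) (x : Fin m → Dm)
    (hP : IsNoncrossing P) (hx : HalfDecCond P x) :
    (∀ r s : Fin (2 * m), P.r r s ↔
      (r = s ∨ ∃ a ∈ hdU P x, (a.1.1 = r ∧ a.2.1 = s) ∨ (a.1.1 = s ∧ a.2.1 = r))) ∧
    (∀ i : Fin m, IsLUB {d : Dm | ∃ n : ℤ, d = toDm n ∧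
        ∃ a ∈ hdU P x, a.1 = (unpr i, n) ∨ a.2 = (unpr i, n)} (x i)) := by
  classical
  have hxne_of_rel : ∀ t : Fin (2 * m), (∃ u, P.r t u ∧ u ≠ t) →
      ∃ n : ℤ, ∀ i : Fin m, t = unpr i → toDm n ≤ x i := by
    intro t ht
    by_cases hi : ∃ i : Fin m, t = unpr i
    · obtain ⟨i, rfl⟩ := hi
      have hxne : x i ≠ (⊥ : Dm) := by
        by_cases hsucc : P.r (unpr i) (prim (cycSucc i))
        · exact (hx i).2.1 hsucc
        · have hnons : ¬ (∀ u, P.r (unpr i) u → u = unpr i) := by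
            intro hall
            obtain ⟨u, hu, hune⟩ := ht
            exact hune (hall u hu)
          obtain ⟨n, hn⟩ := (hx i).2.2 hnons hsucc
          rw [hn]; exact toDm_ne_bot n
      rcases hxv : x i with _ | (_ | n)
      · exact absurd hxv hxne
      · exact ⟨0, fun j hj => by
          have := unpr_inj hj; subst this; rw [hxv]; exact toDm_le_top 0⟩
      · exact ⟨n, fun j hj => by
          have := unpr_inj hj; subst this; rw [hxv]; exact le_of_eq rfl⟩
    · exact ⟨0, fun j hj => absurd ⟨j, hj⟩ hi⟩
  constructor
  · intro r s
    constructor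
    · intro hrs
      by_cases hrs' : r = s
      · exact Or.inl hrs'
      · right
        obtain ⟨nr, hnr⟩ := hxne_of_rel r ⟨s, hrs, fun h => hrs' h.symm⟩
        obtain ⟨ns, hns⟩ := hxne_of_rel s ⟨r, P.iseqv.symm hrs, fun h => hrs' h⟩
        rcases lt_or_gt_of_ne (fun h : r = s => hrs' h) with hlt | hlt
        · refine ⟨((r, nr), (s, ns)), ⟨⟨Or.inl hlt, fun h => absurd h hrs'⟩,
            r, ⟨P.iseqv.refl r, hnr⟩, ⟨hrs, hns⟩⟩, Or.inl ⟨rfl, rfl⟩⟩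
        · refine ⟨((s, ns), (r, nr)), ⟨⟨Or.inl hlt, fun h => absurd h.symm hrs'⟩,
            r, ⟨hrs, hns⟩, ⟨P.iseqv.refl r, hnr⟩⟩, Or.inr ⟨rfl, rfl⟩⟩
    · rintro (rfl | ⟨a, ⟨_, b, ⟨hb1, _⟩, ⟨hb2, _⟩⟩, ⟨h1, h2⟩ | ⟨h1, h2⟩⟩)
      · exact P.iseqv.refl r
      · exact P.iseqv.trans (P.iseqv.symm (h1 ▸ hb1)) (h2 ▸ hb2)
      · exact P.iseqv.symm (P.iseqv.trans (P.iseqv.symm (h1 ▸ hb1)) (h2 ▸ hb2))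
  · intro i
    constructor
    · rintro d ⟨n, rfl, a, ⟨_, b, ⟨_, hr1⟩, ⟨_, hr2⟩⟩, h1 | h2⟩
      · have := hr1 i (by rw [h1])
        simpa [h1] using this
      · have := hr2 i (by rw [h2])
        simpa [h2] using this
    · intro d hd
      rcases hxv : x i with _ | (_ | n)
      · exact bot_le
      · have hall : ∀ n : ℤ, toDm n ≤ d := fun n =>
          hd (mem_endpoints P x i n (by rw [hxv]; exact toDm_le_top n))
        rcases d with _ | (_ | k)
        · exact absurd (hall 0) (WithBot.not_coe_le_bot _)
        · exact le_refl _
        · have h := hall (k + 1)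
          rw [show (some (some k) : Dm) = toDm k from rfl] at h
          have h2 := WithTop.coe_le_coe.mp (WithBot.coe_le_coe.mp h)
          omega
      · exact hd (mem_endpoints P x i n (by rw [hxv]; exact le_of_eq rfl))
end
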